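/- Let E ⊂ ℝ^d be a nonempty compact set and let θ ∈ (0,1]. Then the functions f, g : (0,d) → [0,d] defined by f(t) = dim_θ^t E and g(t) = dim̄_θ^t E are Lipschitz with constant 1; in particular, |dim_θ^t E − dim_θ^s E| ≤ |t − s| and |dim̄_θ^t E − dim̄_θ^s E| ≤ |t − s| for all s, t ∈ (0,d). -/

import Mathlib

open MeasureTheory Metric Set Filter Topology
open scoped ENNReal BigOperators

noncomputable section

/-- `S^s_{r,θ}(E)`: the infimum of `Σ_i |U_i|^s` over covers of `E` by sets `U_i`
with `r ≤ diam (U i) ≤ r ^ θ`.  (Any infinite such cover has infinite sum since each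
term is at least `r ^ s > 0`, so it suffices to take the infimum over finite covers.) -/
def covSum (d : ℕ) (E : Set (EuclideanSpace ℝ (Fin d))) (θ r s : ℝ) : ℝ≥0∞ :=
  ⨅ (n : ℕ) (U : Fin n → Set (EuclideanSpace ℝ (Fin d))) (_ : E ⊆ ⋃ i, U i)
    (_ : ∀ i, r ≤ diam (U i) ∧ diam (U i) ≤ r ^ θ),
    ∑ i, ENNReal.ofReal (diam (U i) ^ s)

/-- The function `r ↦ log S^s_{r,θ}(E) / (− log r)`. -/
def covRatio (d : ℕ) (E : Set (EuclideanSpace ℝ (Fin d))) (θ s r : ℝ) : ℝ :=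
  Real.log (covSum d E θ r s).toReal / (- Real.log r)

/-- The lower `θ`-intermediate dimension: the unique `s ∈ [0,d]` with
`liminf_{r→0⁺} log S^s_{r,θ}(E)/(−log r) = 0`. -/
def lowerInterDim (d : ℕ) (θ : ℝ) (E : Set (EuclideanSpace ℝ (Fin d))) : ℝ :=
  Classical.epsilon fun s : ℝ =>
    s ∈ Icc (0 : ℝ) d ∧ liminf (covRatio d E θ s) (𝓝[>] (0 : ℝ)) = 0

/-- The upper `θ`-intermediate dimension: the unique `s ∈ [0,d]` with
`limsup_{r→0⁺} log S^s_{r,θ}(E)/(−log r) = 0`. -/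
def upperInterDim (d : ℕ) (θ : ℝ) (E : Set (EuclideanSpace ℝ (Fin d))) : ℝ :=
  Classical.epsilon fun s : ℝ =>
    s ∈ Icc (0 : ℝ) d ∧ limsup (covRatio d E θ s) (𝓝[>] (0 : ℝ)) = 0

/-- The lower quasi-Hausdorff dimension `lim_{θ→0⁺} dim_θ E`. -/
def lowerQH (d : ℕ) (E : Set (EuclideanSpace ℝ (Fin d))) : ℝ :=
  Classical.epsilon fun L : ℝ =>
    Tendsto (fun θ => lowerInterDim d θ E) (𝓝[>] (0 : ℝ)) (𝓝 L)

/-- The upper quasi-Hausdorff dimension `lim_{θ→0⁺} dim̄_θ E`. -/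
def upperQH (d : ℕ) (E : Set (EuclideanSpace ℝ (Fin d))) : ℝ :=
  Classical.epsilon fun L : ℝ =>
    Tendsto (fun θ => upperInterDim d θ E) (𝓝[>] (0 : ℝ)) (𝓝 L)

/-- The kernel `φ_{r,θ}^{s,t}`. -/
def kerPhi (d : ℕ) (r θ s t : ℝ) (x : EuclideanSpace ℝ (Fin d)) : ℝ :=
  if ‖x‖ < r then 1
  else if ‖x‖ ≤ r ^ θ then (r / ‖x‖) ^ s
  else r ^ (θ * (t - s) + s) / ‖x‖ ^ t

/-- The capacity `C_{r,θ}^{s,t}(E)`: the reciprocal of the infimum over Borel probability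
measures supported on `E` of the double integral of `φ_{r,θ}^{s,t}(x−y)`. -/
def capacity (d : ℕ) (E : Set (EuclideanSpace ℝ (Fin d))) (θ r s t : ℝ) : ℝ :=
  (sInf { I : ℝ | ∃ μ : Measure (EuclideanSpace ℝ (Fin d)),
      IsProbabilityMeasure μ ∧ μ Eᶜ = 0 ∧
      I = ∫ x, ∫ y, kerPhi d r θ s t (x - y) ∂μ ∂μ })⁻¹

/-- The function `r ↦ log C_{r,θ}^{s,t}(E) / (− log r)`. -/
def capRatio (d : ℕ) (E : Set (EuclideanSpace ℝ (Fin d))) (θ s t r : ℝ) : ℝ :=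
  Real.log (capacity d E θ r s t) / (- Real.log r)

/-- The lower `θ`-intermediate dimension profile `dim_θ^t E`: the unique `s ∈ [0,t]`
with `liminf_{r→0⁺} log C_{r,θ}^{s,t}(E)/(−log r) = s`. -/
def lowerProfile (d : ℕ) (θ t : ℝ) (E : Set (EuclideanSpace ℝ (Fin d))) : ℝ :=
  Classical.epsilon fun s : ℝ =>
    s ∈ Icc (0 : ℝ) t ∧ liminf (capRatio d E θ s t) (𝓝[>] (0 : ℝ)) = s

/-- The upper `θ`-intermediate dimension profile `dim̄_θ^t E`: the unique `s ∈ [0,t]`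
with `limsup_{r→0⁺} log C_{r,θ}^{s,t}(E)/(−log r) = s`. -/
def upperProfile (d : ℕ) (θ t : ℝ) (E : Set (EuclideanSpace ℝ (Fin d))) : ℝ :=
  Classical.epsilon fun s : ℝ =>
    s ∈ Icc (0 : ℝ) t ∧ limsup (capRatio d E θ s t) (𝓝[>] (0 : ℝ)) = s

/-- `N_r(A)`: the smallest number of sets of diameter at most `r` needed to cover `A`. -/
def coverNumber (d : ℕ) (A : Set (EuclideanSpace ℝ (Fin d))) (r : ℝ) : ℝ≥0∞ :=
  ⨅ (n : ℕ) (U : Fin n → Set (EuclideanSpace ℝ (Fin d))) (_ : A ⊆ ⋃ i, U i)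
    (_ : ∀ i, diam (U i) ≤ r), (n : ℝ≥0∞)

/-- The lower box dimension `liminf_{r→0⁺} log N_r(E)/(−log r)`. -/
def lowerBoxDim (d : ℕ) (E : Set (EuclideanSpace ℝ (Fin d))) : ℝ :=
  liminf (fun r : ℝ => Real.log ((coverNumber d E r).toReal) / (- Real.log r)) (𝓝[>] (0 : ℝ))

/-- The upper box dimension `limsup_{r→0⁺} log N_r(E)/(−log r)`. -/
def upperBoxDim (d : ℕ) (E : Set (EuclideanSpace ℝ (Fin d))) : ℝ :=
  limsup (fun r : ℝ => Real.log ((coverNumber d E r).toReal) / (- Real.log r)) (𝓝[>] (0 : ℝ))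

/-- The Assouad dimension. -/
def assouadDim (d : ℕ) (E : Set (EuclideanSpace ℝ (Fin d))) : ℝ :=
  sInf { s : ℝ | 0 ≤ s ∧ ∃ C : ℝ, 0 < C ∧ ∀ x ∈ E, ∀ r R : ℝ, 0 < r → r < R →
    coverNumber d (ball x R ∩ E) r ≤ ENNReal.ofReal (C * (R / r) ^ s) }

/-- The upper Assouad spectrum `dim_A^α E`. -/
def assouadSpectrum (d : ℕ) (α : ℝ) (E : Set (EuclideanSpace ℝ (Fin d))) : ℝ :=
  sInf { t : ℝ | 0 ≤ t ∧ ∃ C : ℝ, 0 < C ∧ ∀ x ∈ E, ∀ r R : ℝ,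
    0 < r → r ≤ R ^ (1 / α) → R ^ (1 / α) < R → R < 1 →
    coverNumber d (ball x R ∩ E) r ≤ ENNReal.ofReal (C * (R / r) ^ t) }

/-- The quasi-Assouad dimension `lim_{α→1⁻} dim_A^α E`. -/
def quasiAssouad (d : ℕ) (E : Set (EuclideanSpace ℝ (Fin d))) : ℝ :=
  Classical.epsilon fun L : ℝ =>
    Tendsto (fun α => assouadSpectrum d α E) (𝓝[<] (1 : ℝ)) (𝓝 L)

/-!
Write `F t s` for the lower (or upper) limit of `log C_{r,θ}^{s,t}(E) / (-log r)`. Comparing the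
kernels pointwise on the bounded set `E - E` shows that `F t` is nondecreasing with slope at most
`1 - θ`, and that raising `t` to `t'` raises `F t s` by between `0` and `θ (t' - t)`. Hence
`s ↦ F t s - s` decreases with slope at least `θ`, so a fixed point of `F t'` lies between the
fixed point `a` of `F t` and `a + θ (t' - t) / θ = a + (t' - t)`.
-/

section AsymptoticallyMonotone

variable {α : Type*} {l : Filter α}

structure AsymptoticallyMonotone (l : Filter α) (Λ : (α → ℝ) → ℝ) : Prop where
  map_zero : Λ 0 = 0
  le_add_of_eventually_le : ∀ ⦃u v w : α → ℝ⦄ ⦃c : ℝ⦄,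
    IsBoundedUnder (· ≤ ·) l (fun x => |u x|) → IsBoundedUnder (· ≤ ·) l (fun x => |v x|) →
    Tendsto w l (𝓝 0) → (∀ᶠ x in l, u x ≤ v x + c + w x) → Λ u ≤ Λ v + c

lemma asymptoticallyMonotone_liminf [l.NeBot] : AsymptoticallyMonotone l (liminf · l) where
  map_zero := liminf_const 0
  le_add_of_eventually_le u v w c hu hv hw h := by
    rw [isBoundedUnder_le_abs] at hu hv
    have hcw : Tendsto (fun x => c + w x) l (𝓝 c) := by simpa using hw.const_add c
    calc liminf u l ≤ liminf ((fun x => c + w x) + v) l :=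
          liminf_le_liminf (h.mono fun x hx => by simp only [Pi.add_apply]; linarith) hu.2
            (isBoundedUnder_le_add hcw.isBoundedUnder_le hv.1).isCoboundedUnder_flip
      _ ≤ limsup (fun x => c + w x) l + liminf v l :=
          liminf_add_le hcw.isBoundedUnder_ge hcw.isBoundedUnder_le hv.2
            hv.1.isCoboundedUnder_flip
      _ = liminf v l + c := by rw [hcw.limsup_eq, add_comm]

lemma asymptoticallyMonotone_limsup [l.NeBot] : AsymptoticallyMonotone l (limsup · l) where
  map_zero := limsup_const 0
  le_add_of_eventually_le u v w c hu hv hw h := by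
    rw [isBoundedUnder_le_abs] at hu hv
    have hcw : Tendsto (fun x => c + w x) l (𝓝 c) := by simpa using hw.const_add c
    calc limsup u l ≤ limsup (v + fun x => c + w x) l :=
          limsup_le_limsup (h.mono fun x hx => by simp only [Pi.add_apply]; linarith)
            hu.2.isCoboundedUnder_flip (isBoundedUnder_le_add hv.1 hcw.isBoundedUnder_le)
      _ ≤ limsup v l + limsup (fun x => c + w x) l :=
          limsup_add_le hv.2 hv.1 hcw.isBoundedUnder_ge.isCoboundedUnder_flip
            hcw.isBoundedUnder_le
      _ = limsup v l + c := by rw [hcw.limsup_eq]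

end AsymptoticallyMonotone

/-- `F t s` abstracts the growth exponent of `C_{r,θ}^{s,t}(E)` as `r → 0`; the profile at `t` is
a fixed point of `F t` in `[0, t]`. -/
structure IsProfileFamily (θ : ℝ) (F : ℝ → ℝ → ℝ) : Prop where
  nonneg : ∀ ⦃t⦄, 0 ≤ t → 0 ≤ F t 0
  le_self : ∀ ⦃t⦄, 0 ≤ t → F t t ≤ t
  mono_s : ∀ ⦃s s' t⦄, 0 ≤ s → s ≤ s' → s' ≤ t → F t s ≤ F t s'
  le_add_s : ∀ ⦃s s' t⦄, 0 ≤ s → s ≤ s' → s' ≤ t → F t s' ≤ F t s + (1 - θ) * (s' - s)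
  mono_t : ∀ ⦃s t t'⦄, 0 ≤ s → s ≤ t → t ≤ t' → F t s ≤ F t' s
  le_add_t : ∀ ⦃s t t'⦄, 0 ≤ s → s ≤ t → t ≤ t' → F t' s ≤ F t s + θ * (t' - t)

def fixedPointProfile (F : ℝ → ℝ → ℝ) (t : ℝ) : ℝ :=
  Classical.epsilon fun s => s ∈ Icc 0 t ∧ F t s = s

namespace IsProfileFamily

variable {θ s t t' a b : ℝ} {F : ℝ → ℝ → ℝ}

lemma lipschitzOnWith (hF : IsProfileFamily θ F) (hθ : 0 ≤ θ) :
    LipschitzOnWith 1 (F t) (Icc 0 t) := by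
  refine LipschitzOnWith.of_le_add fun x hx y hy => ?_
  rcases le_total x y with hxy | hyx
  · linarith [hF.mono_s hx.1 hxy hy.2, dist_nonneg (x := x) (y := y)]
  · have := hF.le_add_s hy.1 hyx hx.2
    rw [Real.dist_eq, abs_of_nonneg (sub_nonneg.mpr hyx)]
    nlinarith

lemma exists_fixedPoint (hF : IsProfileFamily θ F) (hθ : 0 ≤ θ) (ht : 0 ≤ t) :
    ∃ s, s ∈ Icc 0 t ∧ F t s = s := by
  have hcont : ContinuousOn (fun s => F t s - s) (Icc 0 t) :=
    ((hF.lipschitzOnWith hθ).continuousOn).sub continuousOn_id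
  have hzero : (0 : ℝ) ∈ Icc (F t t - t) (F t 0 - 0) :=
    ⟨by linarith [hF.le_self ht], by linarith [hF.nonneg ht]⟩
  obtain ⟨s, hs, hfix⟩ := intermediate_value_Icc' ht hcont hzero
  exact ⟨s, hs, sub_eq_zero.mp hfix⟩

lemma fixedPointProfile_spec (hF : IsProfileFamily θ F) (hθ : 0 ≤ θ) (ht : 0 ≤ t) :
    fixedPointProfile F t ∈ Icc 0 t ∧ F t (fixedPointProfile F t) = fixedPointProfile F t :=
  Classical.epsilon_spec (hF.exists_fixedPoint hθ ht)

lemma fixedPoint_le_and_sub_le (hF : IsProfileFamily θ F) (hθ : 0 < θ) (htt' : t ≤ t')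
    (ha : a ∈ Icc 0 t) (hfa : F t a = a) (hb : b ∈ Icc 0 t') (hfb : F t' b = b) :
    a ≤ b ∧ b - a ≤ t' - t := by
  have hmono := hF.mono_t ha.1 ha.2 htt'
  have hab : a ≤ b := by
    by_contra! hba
    have := hF.le_add_s hb.1 hba.le (ha.2.trans htt')
    nlinarith
  have h₁ := hF.le_add_s ha.1 hab hb.2
  have h₂ := hF.le_add_t ha.1 ha.2 htt'
  exact ⟨hab, by nlinarith⟩

lemma abs_fixedPointProfile_sub_le (hF : IsProfileFamily θ F) (hθ : 0 < θ) (hs : 0 ≤ s)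
    (ht : 0 ≤ t) : |fixedPointProfile F t - fixedPointProfile F s| ≤ |t - s| := by
  wlog hst : s ≤ t generalizing s t
  · rw [abs_sub_comm, abs_sub_comm t]
    exact this ht hs (le_of_not_ge hst)
  obtain ⟨ha, hfa⟩ := hF.fixedPointProfile_spec hθ.le hs
  obtain ⟨hb, hfb⟩ := hF.fixedPointProfile_spec hθ.le ht
  obtain ⟨hab, hba⟩ := hF.fixedPoint_le_and_sub_le hθ hst ha hfa hb hfb
  rwa [abs_of_nonneg (sub_nonneg.mpr hab), abs_of_nonneg (sub_nonneg.mpr hst)]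

end IsProfileFamily

section Energy

variable {V : Type*} [AddGroup V] [MeasurableSpace V]
  {E : Set V} {K K₁ K₂ : V → ℝ} {μ : Measure V} {a c C₁ C₂ : ℝ}

def kernelEnergy (K : V → ℝ) (μ : Measure V) : ℝ := ∫ x, ∫ y, K (x - y) ∂μ ∂μ

def minEnergy (E : Set V) (K : V → ℝ) : ℝ :=
  sInf {I : ℝ | ∃ μ : Measure V, IsProbabilityMeasure μ ∧ μ Eᶜ = 0 ∧ I = kernelEnergy K μ}

lemma kernelEnergy_const [IsProbabilityMeasure μ] (a : ℝ) : kernelEnergy (fun _ => a) μ = a := by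
  simp [kernelEnergy]

lemma kernelEnergy_const_mul (c : ℝ) (K : V → ℝ) (μ : Measure V) :
    kernelEnergy (fun z => c * K z) μ = c * kernelEnergy K μ := by
  simp only [kernelEnergy, integral_const_mul]

lemma kernelEnergy_nonneg (hK : ∀ z, 0 ≤ K z) : 0 ≤ kernelEnergy K μ :=
  integral_nonneg fun _ => integral_nonneg fun _ => hK _

lemma kernelEnergy_dirac [MeasurableSingletonClass V] (K : V → ℝ) (x : V) :
    kernelEnergy K (Measure.dirac x) = K 0 := by
  simp [kernelEnergy]

lemma integrable_kernel_prod [MeasurableSub₂ V] [IsFiniteMeasure μ] (hK : Measurable K)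
    (hKC : ∀ z, ‖K z‖ ≤ C₁) :
    Integrable (fun p : V × V => K (p.1 - p.2)) (μ.prod μ) :=
  Integrable.of_bound (hK.comp measurable_sub).aestronglyMeasurable C₁ (ae_of_all _ fun _ => hKC _)

lemma kernelEnergy_le_of_le_on [SFinite μ] (hμ : μ Eᶜ = 0)
    (hK₁ : Integrable (fun p : V × V => K₁ (p.1 - p.2)) (μ.prod μ))
    (hK₂ : Integrable (fun p : V × V => K₂ (p.1 - p.2)) (μ.prod μ))
    (h : ∀ x ∈ E, ∀ y ∈ E, K₁ (x - y) ≤ K₂ (x - y)) :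
    kernelEnergy K₁ μ ≤ kernelEnergy K₂ μ := by
  have hE : ∀ᵐ x ∂μ, x ∈ E := ae_iff.mpr hμ
  rw [kernelEnergy, kernelEnergy, ← integral_prod _ hK₁, ← integral_prod _ hK₂]
  refine integral_mono_ae hK₁ hK₂ ?_
  filter_upwards [Measure.quasiMeasurePreserving_fst.ae hE,
    Measure.quasiMeasurePreserving_snd.ae hE] with p hp₁ hp₂
  exact h _ hp₁ _ hp₂

lemma le_minEnergy [MeasurableSingletonClass V] (hE : E.Nonempty)
    (h : ∀ μ : Measure V, IsProbabilityMeasure μ → μ Eᶜ = 0 → a ≤ kernelEnergy K μ) :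
    a ≤ minEnergy E K := by
  obtain ⟨x, hx⟩ := hE
  refine le_csInf ⟨_, Measure.dirac x, inferInstance, by simp [Measure.dirac_apply, hx], rfl⟩ ?_
  rintro _ ⟨μ, hμ, hsupp, rfl⟩
  exact h μ hμ hsupp

lemma minEnergy_le (hK : ∀ z, 0 ≤ K z) (hμ : IsProbabilityMeasure μ) (hsupp : μ Eᶜ = 0) :
    minEnergy E K ≤ kernelEnergy K μ :=
  csInf_le ⟨0, by rintro _ ⟨ν, -, -, rfl⟩; exact kernelEnergy_nonneg hK⟩ ⟨μ, hμ, hsupp, rfl⟩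

lemma minEnergy_le_apply_zero [MeasurableSingletonClass V] (hK : ∀ z, 0 ≤ K z) {x : V}
    (hx : x ∈ E) : minEnergy E K ≤ K 0 :=
  (minEnergy_le hK inferInstance (by simp [Measure.dirac_apply, hx])).trans_eq
    (kernelEnergy_dirac K x)

lemma le_minEnergy_of_le_on [MeasurableSub₂ V] [MeasurableSingletonClass V] (hE : E.Nonempty)
    (hK : Measurable K) (hKC : ∀ z, ‖K z‖ ≤ C₁) (h : ∀ x ∈ E, ∀ y ∈ E, a ≤ K (x - y)) :
    a ≤ minEnergy E K :=
  le_minEnergy hE fun _ _ hsupp => (kernelEnergy_const a).symm.trans_le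
    (kernelEnergy_le_of_le_on hsupp (integrable_const a) (integrable_kernel_prod hK hKC) h)

lemma minEnergy_le_mul_minEnergy [MeasurableSub₂ V] [MeasurableSingletonClass V]
    (hE : E.Nonempty) (hc : 0 < c)
    (hK₁ : Measurable K₁) (hK₁C : ∀ z, ‖K₁ z‖ ≤ C₁) (hK₁₀ : ∀ z, 0 ≤ K₁ z)
    (hK₂ : Measurable K₂) (hK₂C : ∀ z, ‖K₂ z‖ ≤ C₂)
    (h : ∀ x ∈ E, ∀ y ∈ E, K₁ (x - y) ≤ c * K₂ (x - y)) :
    minEnergy E K₁ ≤ c * minEnergy E K₂ := by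
  rw [← div_le_iff₀' hc]
  refine le_minEnergy hE fun μ hμ hsupp => ?_
  rw [div_le_iff₀' hc, ← kernelEnergy_const_mul]
  exact (minEnergy_le hK₁₀ hμ hsupp).trans (kernelEnergy_le_of_le_on hsupp
    (integrable_kernel_prod hK₁ hK₁C) ((integrable_kernel_prod hK₂ hK₂C).const_mul c) h)

end Energy

section Kernel

variable {d : ℕ} {r θ s s' t t' M : ℝ}

lemma measurable_kerPhi : Measurable (kerPhi d r θ s t) := by
  unfold kerPhi
  refine Measurable.ite (measurableSet_lt measurable_norm measurable_const) measurable_const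
    (Measurable.ite (measurableSet_le measurable_norm measurable_const) ?_ ?_) <;> fun_prop

lemma kerPhi_zero (hr₀ : 0 < r) : kerPhi d r θ s t 0 = 1 := by
  simp [kerPhi, hr₀]

lemma kerPhi_pos (hr₀ : 0 < r) (x : EuclideanSpace ℝ (Fin d)) : 0 < kerPhi d r θ s t x := by
  unfold kerPhi
  split_ifs with h₁
  · exact one_pos
  · have hx : 0 < ‖x‖ := hr₀.trans_le (not_lt.mp h₁)
    exact Real.rpow_pos_of_pos (div_pos hr₀ hx) s
  · have hx : 0 < ‖x‖ := hr₀.trans_le (not_lt.mp h₁)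
    exact div_pos (Real.rpow_pos_of_pos hr₀ _) (Real.rpow_pos_of_pos hx t)

/-- The outer branch of `kerPhi` at `t'` is the one at `t` times `(r ^ θ / ‖x‖) ^ (t' - t)`. -/
lemma rpow_div_rpow_eq_mul {ρ : ℝ} (hr₀ : 0 < r) (hρ : 0 < ρ) :
    r ^ (θ * (t' - s) + s) / ρ ^ t' = r ^ (θ * (t - s) + s) / ρ ^ t * (r ^ θ / ρ) ^ (t' - t) := by
  rw [Real.div_rpow (Real.rpow_nonneg hr₀.le θ) hρ.le, ← Real.rpow_mul hr₀.le,
    show θ * (t' - s) + s = θ * (t - s) + s + θ * (t' - t) by ring, Real.rpow_add hr₀,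
    show t' = t + (t' - t) by ring, Real.rpow_add hρ]
  ring_nf

lemma kerPhi_le_one (hr₀ : 0 < r) (hr₁ : r ≤ 1) (hθ₁ : θ ≤ 1) (hs : 0 ≤ s) (hst : s ≤ t)
    (x : EuclideanSpace ℝ (Fin d)) : kerPhi d r θ s t x ≤ 1 := by
  unfold kerPhi
  split_ifs with h₁ h₂
  · exact le_rfl
  · have hx : 0 < ‖x‖ := hr₀.trans_le (not_lt.mp h₁)
    exact Real.rpow_le_one (div_pos hr₀ hx).le ((div_le_one hx).mpr (not_lt.mp h₁)) hs
  · have hx : 0 < ‖x‖ := hr₀.trans_le (not_lt.mp h₁)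
    rw [div_le_one (Real.rpow_pos_of_pos hx t)]
    calc r ^ (θ * (t - s) + s) ≤ r ^ (θ * t) :=
          Real.rpow_le_rpow_of_exponent_ge hr₀ hr₁ (by nlinarith)
      _ = (r ^ θ) ^ t := Real.rpow_mul hr₀.le θ t
      _ ≤ ‖x‖ ^ t := Real.rpow_le_rpow (Real.rpow_nonneg hr₀.le θ) (not_le.mp h₂).le (hs.trans hst)

lemma rpow_div_rpow_le_kerPhi (hr₀ : 0 < r) (hr₁ : r ≤ 1) (hθ₀ : 0 ≤ θ) (hs : 0 ≤ s)
    (hst : s ≤ t) (hM : 1 ≤ M) {x : EuclideanSpace ℝ (Fin d)} (hx : ‖x‖ ≤ M) :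
    r ^ (θ * (t - s) + s) / M ^ t ≤ kerPhi d r θ s t x := by
  have ht : 0 ≤ t := hs.trans hst
  have hMt : 1 ≤ M ^ t := Real.one_le_rpow hM ht
  have hexp : s ≤ θ * (t - s) + s := by nlinarith
  have hnum : r ^ (θ * (t - s) + s) / M ^ t ≤ r ^ (θ * (t - s) + s) :=
    div_le_self (Real.rpow_nonneg hr₀.le _) hMt
  unfold kerPhi
  split_ifs with h₁ h₂
  · exact hnum.trans (Real.rpow_le_one hr₀.le hr₁ (hs.trans hexp))
  · have hx₀ : 0 < ‖x‖ := hr₀.trans_le (not_lt.mp h₁)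
    calc r ^ (θ * (t - s) + s) / M ^ t ≤ r ^ s :=
          hnum.trans (Real.rpow_le_rpow_of_exponent_ge hr₀ hr₁ hexp)
      _ ≤ (r / ‖x‖) ^ s :=
          Real.rpow_le_rpow hr₀.le
            (le_div_self hr₀.le hx₀ (h₂.trans (Real.rpow_le_one hr₀.le hr₁ hθ₀))) hs
  · have hx₀ : 0 < ‖x‖ := hr₀.trans_le (not_lt.mp h₁)
    gcongr

lemma kerPhi_antitone_s (hr₀ : 0 < r) (hr₁ : r ≤ 1) (hθ₁ : θ ≤ 1) (hss' : s ≤ s')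
    (x : EuclideanSpace ℝ (Fin d)) : kerPhi d r θ s' t x ≤ kerPhi d r θ s t x := by
  unfold kerPhi
  split_ifs with h₁
  · exact le_rfl
  · have hx : 0 < ‖x‖ := hr₀.trans_le (not_lt.mp h₁)
    exact Real.rpow_le_rpow_of_exponent_ge (div_pos hr₀ hx)
      ((div_le_one hx).mpr (not_lt.mp h₁)) hss'
  · have hx : 0 < ‖x‖ := hr₀.trans_le (not_lt.mp h₁)
    gcongr ?_ / _
    exact Real.rpow_le_rpow_of_exponent_ge hr₀ hr₁ (by nlinarith)

lemma kerPhi_le_rpow_mul_kerPhi_s (hr₀ : 0 < r) (hr₁ : r ≤ 1) (hθ₁ : θ ≤ 1) (hss' : s ≤ s')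
    (x : EuclideanSpace ℝ (Fin d)) :
    kerPhi d r θ s t x ≤ r ^ (-((1 - θ) * (s' - s))) * kerPhi d r θ s' t x := by
  have hc : 1 ≤ r ^ (-((1 - θ) * (s' - s))) :=
    Real.one_le_rpow_of_pos_of_le_one_of_nonpos hr₀ hr₁ (by nlinarith)
  unfold kerPhi
  split_ifs with h₁ h₂
  · simpa using hc
  · have hx : 0 < ‖x‖ := hr₀.trans_le (not_lt.mp h₁)
    have hq : 0 < r / ‖x‖ := div_pos hr₀ hx
    have hlow : r ^ (1 - θ) ≤ r / ‖x‖ := by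
      rw [Real.rpow_sub hr₀, Real.rpow_one]
      gcongr
    calc (r / ‖x‖) ^ s = (r / ‖x‖) ^ (-(s' - s)) * (r / ‖x‖) ^ s' := by
          rw [← Real.rpow_add hq]; ring_nf
      _ ≤ (r ^ (1 - θ)) ^ (-(s' - s)) * (r / ‖x‖) ^ s' :=
          mul_le_mul_of_nonneg_right (Real.rpow_le_rpow_of_nonpos (Real.rpow_pos_of_pos hr₀ _)
            hlow (neg_nonpos.mpr (sub_nonneg.mpr hss'))) (Real.rpow_nonneg hq.le _)
      _ = r ^ (-((1 - θ) * (s' - s))) * (r / ‖x‖) ^ s' := by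
          rw [← Real.rpow_mul hr₀.le]; ring_nf
  · rw [show θ * (t - s) + s = -((1 - θ) * (s' - s)) + (θ * (t - s') + s') by ring,
      Real.rpow_add hr₀, mul_div_assoc]

lemma kerPhi_antitone_t (hr₀ : 0 < r) (htt' : t ≤ t') (x : EuclideanSpace ℝ (Fin d)) :
    kerPhi d r θ s t' x ≤ kerPhi d r θ s t x := by
  unfold kerPhi
  split_ifs with h₁ h₂
  · exact le_rfl
  · exact le_rfl
  · have hx : 0 < ‖x‖ := hr₀.trans_le (not_lt.mp h₁)
    rw [rpow_div_rpow_eq_mul (t := t) (t' := t') hr₀ hx]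
    refine mul_le_of_le_one_right (div_nonneg (Real.rpow_nonneg hr₀.le _) (by positivity)) ?_
    exact Real.rpow_le_one (by positivity) ((div_le_one hx).mpr (not_le.mp h₂).le)
      (by linarith)

lemma kerPhi_le_rpow_mul_kerPhi_t (hr₀ : 0 < r) (hr₁ : r ≤ 1) (hθ₀ : 0 ≤ θ) (hM : 1 ≤ M)
    (htt' : t ≤ t') {x : EuclideanSpace ℝ (Fin d)} (hx : ‖x‖ ≤ M) :
    kerPhi d r θ s t x ≤ r ^ (-(θ * (t' - t))) * M ^ (t' - t) * kerPhi d r θ s t' x := by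
  have hτ : 0 ≤ t' - t := by linarith
  have hc : 1 ≤ r ^ (-(θ * (t' - t))) * M ^ (t' - t) :=
    one_le_mul_of_one_le_of_one_le
      (Real.one_le_rpow_of_pos_of_le_one_of_nonpos hr₀ hr₁ (by nlinarith))
      (Real.one_le_rpow hM hτ)
  unfold kerPhi
  split_ifs with h₁ h₂
  · simpa using hc
  · exact le_mul_of_one_le_left
      (Real.rpow_nonneg (div_pos hr₀ (hr₀.trans_le (not_lt.mp h₁))).le _) hc
  · have hx₀ : 0 < ‖x‖ := hr₀.trans_le (not_lt.mp h₁)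
    have hfactor : 1 ≤ r ^ (-(θ * (t' - t))) * M ^ (t' - t) * (r ^ θ / ‖x‖) ^ (t' - t) := by
      calc (1 : ℝ) ≤ M ^ (t' - t) / ‖x‖ ^ (t' - t) :=
            (one_le_div (Real.rpow_pos_of_pos hx₀ _)).mpr (Real.rpow_le_rpow hx₀.le hx hτ)
        _ = _ := by
            rw [Real.div_rpow (Real.rpow_nonneg hr₀.le θ) hx₀.le, ← Real.rpow_mul hr₀.le,
              Real.rpow_neg hr₀.le]
            field_simp
    rw [rpow_div_rpow_eq_mul (t := t) (t' := t') hr₀ hx₀]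
    calc r ^ (θ * (t - s) + s) / ‖x‖ ^ t
        ≤ r ^ (θ * (t - s) + s) / ‖x‖ ^ t
            * (r ^ (-(θ * (t' - t))) * M ^ (t' - t) * (r ^ θ / ‖x‖) ^ (t' - t)) :=
          le_mul_of_one_le_right (div_nonneg (Real.rpow_nonneg hr₀.le _) (by positivity))
            hfactor
      _ = _ := by ring

end Kernel

section Capacity

variable {d : ℕ} {E : Set (EuclideanSpace ℝ (Fin d))} {θ r s s' t t' M c : ℝ}

lemma capacity_eq_inv_minEnergy :
    capacity d E θ r s t = (minEnergy E (kerPhi d r θ s t))⁻¹ := rfl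

lemma norm_kerPhi_le_one (hr₀ : 0 < r) (hr₁ : r ≤ 1) (hθ₁ : θ ≤ 1) (hs : 0 ≤ s) (hst : s ≤ t)
    (z : EuclideanSpace ℝ (Fin d)) : ‖kerPhi d r θ s t z‖ ≤ 1 := by
  rw [Real.norm_of_nonneg (kerPhi_pos hr₀ z).le]
  exact kerPhi_le_one hr₀ hr₁ hθ₁ hs hst z

lemma minEnergy_kerPhi_le_one (hE : E.Nonempty) (hr₀ : 0 < r) :
    minEnergy E (kerPhi d r θ s t) ≤ 1 := by
  obtain ⟨x, hx⟩ := hE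
  simpa [kerPhi_zero hr₀] using minEnergy_le_apply_zero (fun z => (kerPhi_pos hr₀ z).le) hx

section Bounded

variable (hE : E.Nonempty) (hM : 1 ≤ M) (hEM : ∀ x ∈ E, ∀ y ∈ E, ‖x - y‖ ≤ M)
  (hr₀ : 0 < r) (hr₁ : r ≤ 1) (hθ₀ : 0 ≤ θ) (hθ₁ : θ ≤ 1) (hs : 0 ≤ s) (hst : s ≤ t)
include hE hM hEM hr₀ hr₁ hθ₀ hθ₁ hs hst

lemma rpow_div_rpow_le_minEnergy :
    r ^ (θ * (t - s) + s) / M ^ t ≤ minEnergy E (kerPhi d r θ s t) :=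
  le_minEnergy_of_le_on hE measurable_kerPhi (norm_kerPhi_le_one hr₀ hr₁ hθ₁ hs hst)
    fun x hx y hy => rpow_div_rpow_le_kerPhi hr₀ hr₁ hθ₀ hs hst hM (hEM x hx y hy)

lemma minEnergy_kerPhi_pos : 0 < minEnergy E (kerPhi d r θ s t) :=
  (div_pos (Real.rpow_pos_of_pos hr₀ _) (Real.rpow_pos_of_pos (one_pos.trans_le hM) _)).trans_le
    (rpow_div_rpow_le_minEnergy hE hM hEM hr₀ hr₁ hθ₀ hθ₁ hs hst)

lemma one_le_capacity : 1 ≤ capacity d E θ r s t :=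
  (one_le_inv₀ (minEnergy_kerPhi_pos hE hM hEM hr₀ hr₁ hθ₀ hθ₁ hs hst)).mpr
    (minEnergy_kerPhi_le_one hE hr₀)

lemma capacity_le_rpow_mul : capacity d E θ r s t ≤ r ^ (-(θ * (t - s) + s)) * M ^ t :=
  calc capacity d E θ r s t ≤ (r ^ (θ * (t - s) + s) / M ^ t)⁻¹ :=
        inv_anti₀ (div_pos (Real.rpow_pos_of_pos hr₀ _)
          (Real.rpow_pos_of_pos (one_pos.trans_le hM) _))
          (rpow_div_rpow_le_minEnergy hE hM hEM hr₀ hr₁ hθ₀ hθ₁ hs hst)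
    _ = r ^ (-(θ * (t - s) + s)) * M ^ t := by
        rw [inv_div, Real.rpow_neg hr₀.le, div_eq_inv_mul]

lemma capacity_le_mul_capacity (hc : 0 < c) (hs' : 0 ≤ s') (hs't' : s' ≤ t')
    (h : ∀ z : EuclideanSpace ℝ (Fin d), ‖z‖ ≤ M →
      kerPhi d r θ s t z ≤ c * kerPhi d r θ s' t' z) :
    capacity d E θ r s' t' ≤ c * capacity d E θ r s t := by
  have hpos := minEnergy_kerPhi_pos hE hM hEM hr₀ hr₁ hθ₀ hθ₁ hs hst
  have hmin := minEnergy_le_mul_minEnergy hE hc measurable_kerPhi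
    (norm_kerPhi_le_one hr₀ hr₁ hθ₁ hs hst) (fun z => (kerPhi_pos hr₀ z).le) measurable_kerPhi
    (norm_kerPhi_le_one hr₀ hr₁ hθ₁ hs' hs't') fun x hx y hy => h _ (hEM x hx y hy)
  calc capacity d E θ r s' t' ≤ (minEnergy E (kerPhi d r θ s t) / c)⁻¹ :=
        inv_anti₀ (div_pos hpos hc) ((div_le_iff₀' hc).mpr hmin)
    _ = c * capacity d E θ r s t := by rw [inv_div, div_eq_mul_inv, capacity_eq_inv_minEnergy]

end Bounded

end Capacity

section Ratio

open Real

variable {r A B c e K : ℝ}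

lemma log_div_neg_log_le_add (hr₀ : 0 < r) (hr₁ : r < 1) (hA : 0 < A) (hB : 0 < B)
    (hc : 0 < c) (h : A ≤ c * B) :
    log A / -log r ≤ log B / -log r + log c / -log r := by
  rw [← add_div, add_comm, ← log_mul hc.ne' hB.ne']
  exact div_le_div_of_nonneg_right (log_le_log hA h) (neg_pos.mpr (log_neg hr₀ hr₁)).le

lemma log_rpow_neg_mul_div_neg_log (hr₀ : 0 < r) (hr₁ : r < 1) (hK : 0 < K) :
    log (r ^ (-e) * K) / -log r = e + log K / -log r := by
  have hlog : log r ≠ 0 := (log_neg hr₀ hr₁).ne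
  rw [log_mul (rpow_pos_of_pos hr₀ _).ne' hK.ne', log_rpow hr₀, add_div]
  field_simp

variable {d : ℕ} {E : Set (EuclideanSpace ℝ (Fin d))} {θ s s' t t' M : ℝ}
  (hE : E.Nonempty) (hM : 1 ≤ M) (hEM : ∀ x ∈ E, ∀ y ∈ E, ‖x - y‖ ≤ M)
  (hr₀ : 0 < r) (hr₁ : r < 1) (hθ₀ : 0 ≤ θ) (hθ₁ : θ ≤ 1) (hs : 0 ≤ s)
include hE hM hEM hr₀ hr₁ hθ₀ hθ₁ hs

lemma capRatio_nonneg (hst : s ≤ t) : 0 ≤ capRatio d E θ s t r :=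
  div_nonneg (log_nonneg (one_le_capacity hE hM hEM hr₀ hr₁.le hθ₀ hθ₁ hs hst))
    (neg_pos.mpr (log_neg hr₀ hr₁)).le

lemma capRatio_le (hst : s ≤ t) :
    capRatio d E θ s t r ≤ θ * (t - s) + s + t * log M / -log r := by
  have hMt : 0 < M ^ t := rpow_pos_of_pos (one_pos.trans_le hM) t
  have h := log_div_neg_log_le_add hr₀ hr₁ (one_pos.trans_le
    (one_le_capacity hE hM hEM hr₀ hr₁.le hθ₀ hθ₁ hs hst)) one_pos
    (mul_pos (rpow_pos_of_pos hr₀ _) hMt)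
    ((capacity_le_rpow_mul hE hM hEM hr₀ hr₁.le hθ₀ hθ₁ hs hst).trans_eq (mul_one _).symm)
  rwa [log_one, zero_div, zero_add, log_rpow_neg_mul_div_neg_log hr₀ hr₁ hMt,
    log_rpow (one_pos.trans_le hM)] at h

lemma capRatio_le_capRatio_add (hst : s ≤ t) (hs' : 0 ≤ s') (hs't' : s' ≤ t') (hc : 0 < c)
    (h : ∀ z : EuclideanSpace ℝ (Fin d), ‖z‖ ≤ M →
      kerPhi d r θ s t z ≤ c * kerPhi d r θ s' t' z) :
    capRatio d E θ s' t' r ≤ capRatio d E θ s t r + log c / -log r :=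
  log_div_neg_log_le_add hr₀ hr₁
    (one_pos.trans_le (one_le_capacity hE hM hEM hr₀ hr₁.le hθ₀ hθ₁ hs' hs't'))
    (one_pos.trans_le (one_le_capacity hE hM hEM hr₀ hr₁.le hθ₀ hθ₁ hs hst)) hc
    (capacity_le_mul_capacity hE hM hEM hr₀ hr₁.le hθ₀ hθ₁ hs hst hc hs' hs't' h)

lemma capRatio_mono_s (hss' : s ≤ s') (hs't : s' ≤ t) :
    capRatio d E θ s t r ≤ capRatio d E θ s' t r := by
  simpa using capRatio_le_capRatio_add hE hM hEM hr₀ hr₁ hθ₀ hθ₁ (hs.trans hss') hs't hs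
    (hss'.trans hs't) one_pos fun z _ => by
      simpa using kerPhi_antitone_s hr₀ hr₁.le hθ₁ hss' z

lemma capRatio_le_capRatio_add_s (hss' : s ≤ s') (hs't : s' ≤ t) :
    capRatio d E θ s' t r ≤ capRatio d E θ s t r + (1 - θ) * (s' - s) := by
  have h := capRatio_le_capRatio_add hE hM hEM hr₀ hr₁ hθ₀ hθ₁ hs (hss'.trans hs't)
    (hs.trans hss') hs't (rpow_pos_of_pos hr₀ _) fun z _ =>
      kerPhi_le_rpow_mul_kerPhi_s hr₀ hr₁.le hθ₁ hss' z
  rwa [← mul_one (r ^ _), log_rpow_neg_mul_div_neg_log hr₀ hr₁ one_pos, log_one, zero_div,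
    add_zero] at h

lemma capRatio_mono_t (hst : s ≤ t) (htt' : t ≤ t') :
    capRatio d E θ s t r ≤ capRatio d E θ s t' r := by
  simpa using capRatio_le_capRatio_add hE hM hEM hr₀ hr₁ hθ₀ hθ₁ hs (hst.trans htt') hs hst
    one_pos fun z _ => by simpa using kerPhi_antitone_t hr₀ htt' z

lemma capRatio_le_capRatio_add_t (hst : s ≤ t) (htt' : t ≤ t') :
    capRatio d E θ s t' r ≤ capRatio d E θ s t r + θ * (t' - t) + (t' - t) * log M / -log r := by
  have hMτ : 0 < M ^ (t' - t) := rpow_pos_of_pos (one_pos.trans_le hM) _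
  have h := capRatio_le_capRatio_add hE hM hEM hr₀ hr₁ hθ₀ hθ₁ hs hst hs (hst.trans htt')
    (mul_pos (rpow_pos_of_pos hr₀ _) hMτ) fun z hz =>
      kerPhi_le_rpow_mul_kerPhi_t hr₀ hr₁.le hθ₀ hM htt' hz
  rwa [log_rpow_neg_mul_div_neg_log hr₀ hr₁ hMτ, log_rpow (one_pos.trans_le hM), ← add_assoc] at h

end Ratio

lemma tendsto_div_neg_log_nhdsGT_zero (a : ℝ) :
    Tendsto (fun r : ℝ => a / -Real.log r) (𝓝[>] 0) (𝓝 0) := by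
  simpa using (tendsto_neg_atBot_atTop.comp Real.tendsto_log_nhdsGT_zero).const_div_atTop a

lemma isBoundedUnder_abs_capRatio {d : ℕ} {E : Set (EuclideanSpace ℝ (Fin d))} {θ s t M : ℝ}
    (hE : E.Nonempty) (hM : 1 ≤ M) (hEM : ∀ x ∈ E, ∀ y ∈ E, ‖x - y‖ ≤ M) (hθ₀ : 0 ≤ θ)
    (hθ₁ : θ ≤ 1) (hs : 0 ≤ s) (hst : s ≤ t) :
    IsBoundedUnder (· ≤ ·) (𝓝[>] 0) fun r => |capRatio d E θ s t r| := by
  refine isBoundedUnder_of_eventually_le (a := t + 1) ?_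
  filter_upwards [Ioo_mem_nhdsGT one_pos,
    (tendsto_div_neg_log_nhdsGT_zero (t * Real.log M)).eventually (eventually_le_nhds one_pos)]
    with r hr hsmall
  rw [abs_of_nonneg (capRatio_nonneg hE hM hEM hr.1 hr.2 hθ₀ hθ₁ hs hst)]
  nlinarith [capRatio_le hE hM hEM hr.1 hr.2 hθ₀ hθ₁ hs hst]

theorem isProfileFamily_capRatio {d : ℕ} {E : Set (EuclideanSpace ℝ (Fin d))} {θ : ℝ}
    (hE : E.Nonempty) (hEb : Bornology.IsBounded E) (hθ₀ : 0 ≤ θ) (hθ₁ : θ ≤ 1)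
    {Λ : (ℝ → ℝ) → ℝ} (hΛ : AsymptoticallyMonotone (𝓝[>] 0) Λ) :
    IsProfileFamily θ fun t s => Λ (capRatio d E θ s t) := by
  obtain ⟨C, hC⟩ := Metric.isBounded_iff.mp hEb
  obtain ⟨M, hM, hEM⟩ : ∃ M : ℝ, 1 ≤ M ∧ ∀ x ∈ E, ∀ y ∈ E, ‖x - y‖ ≤ M :=
    ⟨max C 1, le_max_right _ _, fun x hx y hy =>
      (dist_eq_norm x y ▸ hC hx hy).trans (le_max_left _ _)⟩
  have hr : ∀ᶠ r in 𝓝[>] (0 : ℝ), r ∈ Ioo 0 1 := Ioo_mem_nhdsGT one_pos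
  have hbdd : ∀ {s t : ℝ}, 0 ≤ s → s ≤ t →
      IsBoundedUnder (· ≤ ·) (𝓝[>] 0) fun r => |capRatio d E θ s t r| :=
    isBoundedUnder_abs_capRatio hE hM hEM hθ₀ hθ₁
  have hzero : IsBoundedUnder (· ≤ ·) (𝓝[>] (0 : ℝ)) fun r => |(0 : ℝ → ℝ) r| := by
    simpa using isBoundedUnder_const
  have hcomp : ∀ {u v : ℝ → ℝ} {c a : ℝ}, IsBoundedUnder (· ≤ ·) (𝓝[>] 0) (fun r => |u r|) →
      IsBoundedUnder (· ≤ ·) (𝓝[>] 0) (fun r => |v r|) →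
      (∀ r ∈ Ioo (0 : ℝ) 1, u r ≤ v r + c + a / -Real.log r) → Λ u ≤ Λ v + c :=
    fun hu hv h => hΛ.le_add_of_eventually_le hu hv (tendsto_div_neg_log_nhdsGT_zero _) (hr.mono h)
  refine ⟨fun t ht => ?_, fun t ht => ?_, fun s s' t hs hss' hs't => ?_,
    fun s s' t hs hss' hs't => ?_, fun s t t' hs hst htt' => ?_, fun s t t' hs hst htt' => ?_⟩
  · simpa [hΛ.map_zero] using hcomp (u := 0) (c := 0) (a := 0) hzero (hbdd le_rfl ht)
      fun r hr => by simpa using capRatio_nonneg hE hM hEM hr.1 hr.2 hθ₀ hθ₁ le_rfl ht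
  · simpa [hΛ.map_zero] using hcomp (v := 0) (c := t) (a := t * Real.log M) (hbdd ht le_rfl) hzero
      fun r hr => by simpa using capRatio_le hE hM hEM hr.1 hr.2 hθ₀ hθ₁ ht le_rfl
  · simpa using hcomp (c := 0) (a := 0) (hbdd hs (hss'.trans hs't)) (hbdd (hs.trans hss') hs't)
      fun r hr => by simpa using capRatio_mono_s hE hM hEM hr.1 hr.2 hθ₀ hθ₁ hs hss' hs't
  · simpa using hcomp (a := 0) (hbdd (hs.trans hss') hs't) (hbdd hs (hss'.trans hs't))
      fun r hr => by
        simpa using capRatio_le_capRatio_add_s hE hM hEM hr.1 hr.2 hθ₀ hθ₁ hs hss' hs't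
  · simpa using hcomp (c := 0) (a := 0) (hbdd hs hst) (hbdd hs (hst.trans htt'))
      fun r hr => by simpa using capRatio_mono_t hE hM hEM hr.1 hr.2 hθ₀ hθ₁ hs hst htt'
  · exact hcomp (hbdd hs (hst.trans htt')) (hbdd hs hst)
      fun r hr => capRatio_le_capRatio_add_t hE hM hEM hr.1 hr.2 hθ₀ hθ₁ hs hst htt'

/-- On `(0,d)` the maps `t ↦ dim_θ^t E` and `t ↦ dim̄_θ^t E` are
Lipschitz with constant `1`. -/
theorem profiles_lipschitz {d : ℕ} (E : Set (EuclideanSpace ℝ (Fin d)))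
    (hE : E.Nonempty) (hEc : IsCompact E)
    (θ : ℝ) (hθ : θ ∈ Ioc (0 : ℝ) 1) :
    ∀ s ∈ Ioo (0 : ℝ) (d : ℝ), ∀ t ∈ Ioo (0 : ℝ) (d : ℝ),
      |lowerProfile d θ t E - lowerProfile d θ s E| ≤ |t - s| ∧
      |upperProfile d θ t E - upperProfile d θ s E| ≤ |t - s| := by
  intro s hs t ht
  have hlower := isProfileFamily_capRatio hE hEc.isBounded hθ.1.le hθ.2
    (asymptoticallyMonotone_liminf (l := 𝓝[>] (0 : ℝ)))
  have hupper := isProfileFamily_capRatio hE hEc.isBounded hθ.1.le hθ.2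
    (asymptoticallyMonotone_limsup (l := 𝓝[>] (0 : ℝ)))
  exact ⟨hlower.abs_fixedPointProfile_sub_le hθ.1 hs.1.le ht.1.le,
    hupper.abs_fixedPointProfile_sub_le hθ.1 hs.1.le ht.1.le⟩
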